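/- Let A be a complex Banach algebra that is biflat with constant K ≥ 1. Then every bounded derivation D from A into its dual bimodule A* is inner: there exists f ∈ A* with D(a) = a·f − f·a for all a ∈ A, and f may be chosen with ‖f‖ ≤ K‖D‖. -/
import Mathlib


/-- `Coch A n` is `Cⁿ(A)`: the Banach space of bounded `(n+1)`-multilinear
functionals on `A`.  In particular `Coch A 1` is the space of bounded bilinear
functionals on `A × A`, i.e. the dual of the projective tensor product `A ⊗̂ A`. -/
abbrev Coch (A : Type*) [NonUnitalNormedRing A] [NormedSpace ℂ A] (n : ℕ) :=
  ContinuousMultilinearMap ℂ (fun _ : Fin (n + 1) => A) ℂ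

/-- `A` is biflat with constant `K`: there is a bounded linear `A`-bimodule map
`ρ` from the bounded bilinear functionals on `A × A` to `A*`, of norm `≤ K`,
which is a left inverse to `π*`, where `π(a ⊗ b) = ab`. -/
def IsBiflat (A : Type*) [NonUnitalNormedRing A] [NormedSpace ℂ A] (K : ℝ) : Prop :=
  ∃ ρ : Coch A 1 →L[ℂ] (A →L[ℂ] ℂ),
    ‖ρ‖ ≤ K ∧
    (∀ (f : A →L[ℂ] ℂ) (Ψ : Coch A 1),
      (∀ x y, Ψ ![x, y] = f (x * y)) → ρ Ψ = f) ∧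
    (∀ (a : A) (Ψ Ψ' : Coch A 1),
      (∀ x y, Ψ' ![x, y] = Ψ ![x, y * a]) → ∀ x, ρ Ψ' x = ρ Ψ (x * a)) ∧
    (∀ (a : A) (Ψ Ψ' : Coch A 1),
      (∀ x y, Ψ' ![x, y] = Ψ ![a * x, y]) → ∀ x, ρ Ψ' x = ρ Ψ (a * x))


/-- Package a continuous bilinear functional as an element of `Coch A 1`. -/
noncomputable def toCoch {A : Type*} [NonUnitalNormedRing A] [NormedSpace ℂ A]
    (B : A →L[ℂ] A →L[ℂ] ℂ) : Coch A 1 :=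
  (((continuousMultilinearCurryFin1 ℂ A ℂ).symm.toContinuousLinearEquiv.toContinuousLinearMap).comp
    B).uncurryLeft

lemma toCoch_apply {A : Type*} [NonUnitalNormedRing A] [NormedSpace ℂ A]
    (B : A →L[ℂ] A →L[ℂ] ℂ) (v : Fin 2 → A) : toCoch B v = B (v 0) (v 1) := rfl

lemma toCoch_norm_le {A : Type*} [NonUnitalNormedRing A] [NormedSpace ℂ A]
    (B : A →L[ℂ] A →L[ℂ] ℂ) : ‖toCoch B‖ ≤ ‖B‖ := by
  refine ContinuousMultilinearMap.opNorm_le_bound (norm_nonneg B) fun v => ?_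
  rw [toCoch_apply, Fin.prod_univ_two]
  calc ‖B (v 0) (v 1)‖ ≤ ‖B (v 0)‖ * ‖v 1‖ := (B (v 0)).le_opNorm _
    _ ≤ ‖B‖ * ‖v 0‖ * ‖v 1‖ :=
      mul_le_mul_of_nonneg_right (B.le_opNorm _) (norm_nonneg _)
    _ = ‖B‖ * (‖v 0‖ * ‖v 1‖) := by ring

/-- If `A` is a complex Banach algebra which is biflat with
constant `K ≥ 1`, then every bounded derivation `D : A → A*` (with respect to
the dual bimodule structure `(a·f)(x) = f(xa)`, `(f·a)(x) = f(ax)`) is inner,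
implemented by some `f ∈ A*` with `‖f‖ ≤ K‖D‖`. -/
theorem biflat_derivation_into_dual_is_inner
    {A : Type*} [NonUnitalNormedRing A] [NormedSpace ℂ A]
    [IsScalarTower ℂ A A] [SMulCommClass ℂ A A] [CompleteSpace A]
    (K : ℝ) (hK : 1 ≤ K) (hbf : IsBiflat A K)
    (D : A →L[ℂ] A →L[ℂ] ℂ)
    (hD : ∀ a b x : A, D (a * b) x = D b (x * a) + D a (b * x)) :
    ∃ f : A →L[ℂ] ℂ,
      (∀ a x : A, D a x = f (x * a) - f (a * x)) ∧
      ‖f‖ ≤ K * ‖D‖ := by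
  obtain ⟨ρ, hρK, h1, h2, h3⟩ := hbf
  set Ψ : Coch A 1 := toCoch (-D) with hΨ
  refine ⟨ρ Ψ, fun a x => ?_, ?_⟩
  · -- the auxiliary cochains `(x, y) ↦ -D x (y * a)` and `(x, y) ↦ -D (a * x) y`
    set B₁ : A →L[ℂ] A →L[ℂ] ℂ :=
      ((ContinuousLinearMap.compL ℂ A A ℂ).flip ((ContinuousLinearMap.mul ℂ A).flip a)).comp
        (-D) with hB₁
    set B₂ : A →L[ℂ] A →L[ℂ] ℂ := (-D).comp ((ContinuousLinearMap.mul ℂ A) a) with hB₂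
    have e₁ : ∀ x y : A, toCoch B₁ ![x, y] = -(D x (y * a)) := by
      intro x y; rw [toCoch_apply]; simp [hB₁]
    have e₂ : ∀ x y : A, toCoch B₂ ![x, y] = -(D (a * x) y) := by
      intro x y; rw [toCoch_apply]; simp [hB₂]
    have eΨ : ∀ x y : A, Ψ ![x, y] = -(D x y) := by
      intro x y; rw [hΨ, toCoch_apply]; simp
    have key : ρ (toCoch B₁ - toCoch B₂) = D a := by
      refine h1 (D a) _ fun x y => ?_
      have h := hD a x y
      simp only [ContinuousMultilinearMap.sub_apply, e₁ x y, e₂ x y]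
      linear_combination h
    have r₁ : ρ (toCoch B₁) x = ρ Ψ (x * a) := by
      refine h2 a Ψ (toCoch B₁) (fun x y => ?_) x
      rw [e₁ x y, eΨ x (y * a)]
    have r₂ : ρ (toCoch B₂) x = ρ Ψ (a * x) := by
      refine h3 a Ψ (toCoch B₂) (fun x y => ?_) x
      rw [e₂ x y, eΨ (a * x) y]
    have := congrArg (fun g : A →L[ℂ] ℂ => g x) key
    simp only [map_sub, ContinuousLinearMap.sub_apply] at this
    rw [r₁, r₂] at this
    exact this.symm
  · calc ‖ρ Ψ‖ ≤ ‖ρ‖ * ‖Ψ‖ := ρ.le_opNorm _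
      _ ≤ K * ‖D‖ := by
        have hΨn : ‖Ψ‖ ≤ ‖D‖ := by
          have h := toCoch_norm_le (-D : A →L[ℂ] A →L[ℂ] ℂ)
          rw [hΨ]
          exact h.trans_eq (norm_neg D)
        exact mul_le_mul hρK hΨn (norm_nonneg _) (by linarith)
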